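/- The representation ^ρ is continuously equivalent to ρ_H: (i) there exists a continuous function F, defined on the set of all ^ρ-names of real numbers, such that for every x ∈ ℝ and every ^ρ-name q of x, F(q) is a ρ_H-name of x; and (ii) there exists a continuous function G, defined on the set of all ρ_H-names of real numbers, such that for every x ∈ ℝ and every ρ_H-name q of x, G(q) is a ^ρ-name of x. -/
import Mathlib


open Filter Topology

/- The name space `ℕ → ℚ` carries the product topology with `ℚ` discrete. -/
local instance : TopologicalSpace ℚ := ⊥

local instance : DiscreteTopology ℚ := ⟨rfl⟩

/-- ρ-name of a real: `|x - q n| ≤ 2^{-n}` for all `n`. -/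
def IsRhoName (q : ℕ → ℚ) (x : ℝ) : Prop :=
  ∀ n : ℕ, |x - (q n : ℝ)| ≤ (2 : ℝ) ^ (-(n : ℤ))

/-- A ρ_H-name of `x`: a rational sequence with `|q n - x| ≤ 2^{-n}` for all
sufficiently large `n`. -/
def IsRhoHName (q : ℕ → ℚ) (x : ℝ) : Prop :=
  ∃ N : ℕ, ∀ n : ℕ, N ≤ n → |(q n : ℝ) - x| ≤ (2 : ℝ) ^ (-(n : ℤ))

/-- A `^ρ`-name of `x`: a double sequence (via `Nat.pair`) for which there is an `M`
such that all columns from the `M`-th on coincide with the `M`-th column, which is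
a ρ-name of `x`. -/
def IsHatRhoName (q : ℕ → ℚ) (x : ℝ) : Prop :=
  ∃ M : ℕ,
    (∀ n m : ℕ, M ≤ m → q (Nat.pair n m) = q (Nat.pair n M)) ∧
    IsRhoName (fun n => q (Nat.pair n M)) x

/-- The Cauchy check on the window `[k, m]`. -/
def Good (q : ℕ → ℚ) (k m : ℕ) : Prop :=
  ∀ i j : ℕ, k ≤ i → i ≤ j → j ≤ m →
    |q i - q j| ≤ (2 : ℚ) ^ (-(i : ℤ)) + (2 : ℚ) ^ (-(j : ℤ))

lemma good_self (q : ℕ → ℚ) (m : ℕ) : Good q m m := by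
  intro i j hi hij hjm
  have : i = j := le_antisymm hij (hjm.trans hi)
  subst this
  simp only [sub_self, abs_zero]
  positivity


open Classical in
/-- minimal `k` such that the Cauchy check holds on `[k, m]`. -/
noncomputable def kIdx (q : ℕ → ℚ) (m : ℕ) : ℕ :=
  Nat.find (⟨m, good_self q m⟩ : ∃ k, Good q k m)

open Classical in
lemma kIdx_spec (q : ℕ → ℚ) (m : ℕ) : Good q (kIdx q m) m :=
  Nat.find_spec (⟨m, good_self q m⟩ : ∃ k, Good q k m)

open Classical in
lemma kIdx_le (q : ℕ → ℚ) {k m : ℕ} (h : Good q k m) : kIdx q m ≤ k :=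
  Nat.find_le h

lemma kIdx_mono (q : ℕ → ℚ) {m m' : ℕ} (h : m ≤ m') : kIdx q m ≤ kIdx q m' := by
  apply kIdx_le
  intro i j hi hij hjm
  exact kIdx_spec q m' i j hi hij (hjm.trans h)

lemma kIdx_self_le (q : ℕ → ℚ) (m : ℕ) : kIdx q m ≤ m := kIdx_le q (good_self q m)

lemma kIdx_congr {q q' : ℕ → ℚ} {m : ℕ} (h : ∀ i ≤ m, q' i = q i) :
    kIdx q' m = kIdx q m := by
  have key : ∀ k, Good q' k m ↔ Good q k m := by
    intro k
    constructor <;> intro hg i j hi hij hjm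
    · have := hg i j hi hij hjm
      rwa [h i ((hij.trans hjm)), h j hjm] at this
    · have := hg i j hi hij hjm
      rwa [← h i ((hij.trans hjm)), ← h j hjm] at this
  exact le_antisymm (kIdx_le q' ((key _).mpr (kIdx_spec q m)))
    (kIdx_le q ((key _).mp (kIdx_spec q' m)))

lemma two_zpow_le {n i : ℕ} (h : n ≤ i) :
    (2 : ℝ) ^ (-(i : ℤ)) ≤ (2 : ℝ) ^ (-(n : ℤ)) := by
  apply zpow_le_zpow_right₀ one_le_two
  omega

lemma tendsto_two_zpow : Tendsto (fun j : ℕ => (2 : ℝ) ^ (-(j : ℤ))) atTop (𝓝 0) := by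
  have h : ∀ j : ℕ, (2 : ℝ) ^ (-(j : ℤ)) = (2⁻¹ : ℝ) ^ j := by
    intro j; rw [zpow_neg, zpow_natCast, inv_pow]
  simp only [h]
  exact tendsto_pow_atTop_nhds_zero_of_lt_one (by norm_num) (by norm_num)

/-- If `q` is eventually a name of `x` and the Cauchy check holds from `K` on,
then `q` is accurate from `K` on. -/
lemma accurate_from_good {q : ℕ → ℚ} {x : ℝ} {N K : ℕ}
    (hN : ∀ n, N ≤ n → |(q n : ℝ) - x| ≤ (2 : ℝ) ^ (-(n : ℤ)))
    (hK : ∀ i j, K ≤ i → i ≤ j → |q i - q j| ≤ (2 : ℚ) ^ (-(i : ℤ)) + (2 : ℚ) ^ (-(j : ℤ)))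
    {i : ℕ} (hi : K ≤ i) : |(q i : ℝ) - x| ≤ (2 : ℝ) ^ (-(i : ℤ)) := by
  have key : ∀ j, max i N ≤ j →
      |(q i : ℝ) - x| ≤ (2 : ℝ) ^ (-(i : ℤ)) + 2 * (2 : ℝ) ^ (-(j : ℤ)) := by
    intro j hj
    have h1 : i ≤ j := le_trans (le_max_left _ _) hj
    have h2 : N ≤ j := le_trans (le_max_right _ _) hj
    have hc : |(q i : ℝ) - (q j : ℝ)| ≤ (2 : ℝ) ^ (-(i : ℤ)) + (2 : ℝ) ^ (-(j : ℤ)) := by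
      have := hK i j hi h1
      have := (Rat.cast_le (K := ℝ)).mpr this
      push_cast at this
      convert this using 2
    calc |(q i : ℝ) - x| ≤ |(q i : ℝ) - (q j : ℝ)| + |(q j : ℝ) - x| := abs_sub_le _ _ _
      _ ≤ ((2 : ℝ) ^ (-(i : ℤ)) + (2 : ℝ) ^ (-(j : ℤ))) + (2 : ℝ) ^ (-(j : ℤ)) :=
          add_le_add hc (hN j h2)
      _ = (2 : ℝ) ^ (-(i : ℤ)) + 2 * (2 : ℝ) ^ (-(j : ℤ)) := by ring
  have hlim : Tendsto (fun j : ℕ => (2 : ℝ) ^ (-(i : ℤ)) + 2 * (2 : ℝ) ^ (-(j : ℤ)))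
      atTop (𝓝 ((2 : ℝ) ^ (-(i : ℤ)))) := by
    have := (tendsto_two_zpow.const_mul (2 : ℝ)).const_add ((2 : ℝ) ^ (-(i : ℤ)))
    simpa using this
  exact ge_of_tendsto hlim (eventually_atTop.mpr ⟨max i N, key⟩)

/-- The translation `ρ_H → ^ρ`. -/
noncomputable def GFun (q : ℕ → ℚ) (p : ℕ) : ℚ :=
  q (max p.unpair.1 (kIdx q p.unpair.2))

lemma GFun_pair (q : ℕ → ℚ) (n m : ℕ) :
    GFun q (Nat.pair n m) = q (max n (kIdx q m)) := by
  simp [GFun, Nat.unpair_pair]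

lemma GFun_continuous : Continuous GFun := by
  apply continuous_pi
  intro p
  apply IsLocallyConstant.continuous
  rw [IsLocallyConstant.iff_exists_open]
  intro q0
  set n := p.unpair.1
  set m := p.unpair.2
  set B := max n m
  refine ⟨{q : ℕ → ℚ | ∀ i ≤ B, q i = q0 i}, ?_, fun i _ => rfl, ?_⟩
  · have : {q : ℕ → ℚ | ∀ i ≤ B, q i = q0 i} =
        ⋂ i : Fin (B + 1), {q : ℕ → ℚ | q i = q0 i} := by
      ext q
      simp only [Set.mem_setOf_eq, Set.mem_iInter]
      constructor
      · intro h i; exact h i (Nat.lt_succ_iff.mp i.2)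
      · intro h i hi; exact h ⟨i, Nat.lt_succ_of_le hi⟩
    rw [this]
    refine isOpen_iInter_of_finite fun i => ?_
    have : {q : ℕ → ℚ | q (i : ℕ) = q0 (i : ℕ)} =
        (fun q : ℕ → ℚ => q (i : ℕ)) ⁻¹' {q0 (i : ℕ)} := rfl
    rw [this]
    exact (isOpen_discrete _).preimage (continuous_apply (i : ℕ))
  · intro q hq
    have hk : kIdx q m = kIdx q0 m :=
      kIdx_congr fun i hi => hq i (hi.trans (le_max_right _ _))
    show q (max n (kIdx q m)) = q0 (max n (kIdx q0 m))
    rw [hk]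
    exact hq _ (max_le (le_max_left _ _) ((kIdx_self_le q0 m).trans (le_max_right _ _)))

/-- `^ρ` is continuously equivalent to `ρ_H`. -/
theorem stmt17 :
    (∃ F : (ℕ → ℚ) → (ℕ → ℚ),
        ContinuousOn F {q | ∃ x : ℝ, IsHatRhoName q x} ∧
        ∀ (x : ℝ) (q : ℕ → ℚ), IsHatRhoName q x → IsRhoHName (F q) x) ∧
    (∃ G : (ℕ → ℚ) → (ℕ → ℚ),
        ContinuousOn G {q | ∃ x : ℝ, IsRhoHName q x} ∧
        ∀ (x : ℝ) (q : ℕ → ℚ), IsRhoHName q x → IsHatRhoName (G q) x) := by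
  constructor
  · -- F : diagonal
    refine ⟨fun q n => q (Nat.pair n n), ?_, ?_⟩
    · exact (continuous_pi fun n => continuous_apply _).continuousOn
    · rintro x q ⟨M, hcol, hname⟩
      refine ⟨M, fun n hn => ?_⟩
      show |(q (Nat.pair n n) : ℝ) - x| ≤ _
      rw [hcol n n hn, abs_sub_comm]
      exact hname n
  · refine ⟨GFun, GFun_continuous.continuousOn, ?_⟩
    rintro x q ⟨N, hN⟩
    -- the stabilization index
    have hbdd : ∀ m, kIdx q m ≤ N := by
      intro m
      rcases le_total m N with h | h
      · exact (kIdx_self_le q m).trans h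
      · apply kIdx_le
        intro i j hi hij hjm
        rw [← Rat.cast_le (K := ℝ)]
        push_cast
        calc |(q i : ℝ) - (q j : ℝ)|
            ≤ |(q i : ℝ) - x| + |x - (q j : ℝ)| := abs_sub_le _ _ _
          _ ≤ (2 : ℝ) ^ (-(i : ℤ)) + (2 : ℝ) ^ (-(j : ℤ)) := by
              apply add_le_add (hN i hi)
              rw [abs_sub_comm]
              exact hN j (hi.trans hij)
    set S : Set ℕ := Set.range fun m => kIdx q m with hS
    have hSne : S.Nonempty := ⟨kIdx q 0, ⟨0, rfl⟩⟩
    have hSbdd : BddAbove S := ⟨N, by rintro y ⟨m, rfl⟩; exact hbdd m⟩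
    set K := sSup S with hK
    obtain ⟨m0, hm0⟩ : K ∈ S := Nat.sSup_mem hSne hSbdd
    have hconst : ∀ m, m0 ≤ m → kIdx q m = K := by
      intro m hm
      refine le_antisymm (le_csSup hSbdd ⟨m, rfl⟩) ?_
      rw [← hm0]
      exact kIdx_mono q hm
    have hKgood : ∀ i j, K ≤ i → i ≤ j →
        |q i - q j| ≤ (2 : ℚ) ^ (-(i : ℤ)) + (2 : ℚ) ^ (-(j : ℤ)) := by
      intro i j hi hij
      have hm : kIdx q (max j m0) = K := hconst _ (le_max_right _ _)
      have := kIdx_spec q (max j m0)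
      rw [hm] at this
      exact this i j hi hij (le_max_left _ _)
    refine ⟨m0, ?_, ?_⟩
    · intro n m hm
      rw [GFun_pair, GFun_pair, hconst m hm, hconst m0 le_rfl]
    · intro n
      simp only [GFun_pair, hconst m0 le_rfl]
      have h1 : K ≤ max n K := le_max_right _ _
      have h2 : |(q (max n K) : ℝ) - x| ≤ (2 : ℝ) ^ (-((max n K : ℕ) : ℤ)) :=
        accurate_from_good hN hKgood h1
      rw [abs_sub_comm]
      exact h2.trans (two_zpow_le (le_max_left _ _))
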